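/- Let V be a multiplicative unitary on a finite-dimensional Hilbert space H and let f,g ∈ H satisfy V(f⊗g) = f⊗g. Then for all ξ,η ∈ H, the operators L(ω_{ξ,f}) and ρ(ω_{g,η})* commute. -/

import Mathlib

open scoped InnerProductSpace ComplexOrder

noncomputable section

namespace MU

variable {ι : Type*} [Fintype ι] [DecidableEq ι]

/-- The elementary tensor `f ⊗ g` of two vectors, in the model
`H ⊗ H = EuclideanSpace ℂ (ι × ι)`. -/
def tens (f g : EuclideanSpace ℂ ι) : EuclideanSpace ℂ (ι × ι) :=
  WithLp.toLp 2 (fun p => f p.1 * g p.2)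

/-- `g ↦ f ⊗ g` as a linear map. -/
def tensL (f : EuclideanSpace ℂ ι) :
    EuclideanSpace ℂ ι →ₗ[ℂ] EuclideanSpace ℂ (ι × ι) where
  toFun g := tens f g
  map_add' x y := by
    ext p; simp only [tens, PiLp.add_apply]; ring
  map_smul' c x := by
    ext p; simp only [tens, PiLp.smul_apply, smul_eq_mul, RingHom.id_apply]; ring

/-- `f ↦ f ⊗ g` as a linear map. -/
def tensR (g : EuclideanSpace ℂ ι) :
    EuclideanSpace ℂ ι →ₗ[ℂ] EuclideanSpace ℂ (ι × ι) where
  toFun f := tens f g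
  map_add' x y := by
    ext p; simp only [tens, PiLp.add_apply]; ring
  map_smul' c x := by
    ext p; simp only [tens, PiLp.smul_apply, smul_eq_mul, RingHom.id_apply]; ring

/-- Action of a matrix on a Euclidean space vector. -/
def appM {κ : Type*} [Fintype κ] (M : Matrix κ κ ℂ) (v : EuclideanSpace ℂ κ) :
    EuclideanSpace ℂ κ :=
  WithLp.toLp 2 (fun i => ∑ j, M i j * v j)

/-- Action of a matrix as a linear map on the Euclidean space. -/
def mact {κ : Type*} [Fintype κ] (M : Matrix κ κ ℂ) :
    EuclideanSpace ℂ κ →ₗ[ℂ] EuclideanSpace ℂ κ where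
  toFun := appM M
  map_add' x y := by
    ext i; simp only [appM, PiLp.add_apply, mul_add, Finset.sum_add_distrib]
  map_smul' c x := by
    ext i; simp only [appM, PiLp.smul_apply, smul_eq_mul, Finset.mul_sum, RingHom.id_apply]
    exact Finset.sum_congr rfl fun j _ => by ring

/-- The leg `V₁₂` on `H ⊗ H ⊗ H`. -/
def leg12 (V : Matrix (ι × ι) (ι × ι) ℂ) : Matrix (ι × ι × ι) (ι × ι × ι) ℂ :=
  fun p q => V (p.1, p.2.1) (q.1, q.2.1) * (if p.2.2 = q.2.2 then 1 else 0)

/-- The leg `V₁₃` on `H ⊗ H ⊗ H`. -/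
def leg13 (V : Matrix (ι × ι) (ι × ι) ℂ) : Matrix (ι × ι × ι) (ι × ι × ι) ℂ :=
  fun p q => V (p.1, p.2.2) (q.1, q.2.2) * (if p.2.1 = q.2.1 then 1 else 0)

/-- The leg `V₂₃` on `H ⊗ H ⊗ H`. -/
def leg23 (V : Matrix (ι × ι) (ι × ι) ℂ) : Matrix (ι × ι × ι) (ι × ι × ι) ℂ :=
  fun p q => V (p.2.1, p.2.2) (q.2.1, q.2.2) * (if p.1 = q.1 then 1 else 0)

/-- The pentagon equation `V₁₂ V₁₃ V₂₃ = V₂₃ V₁₂`. -/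
def Pentagon (V : Matrix (ι × ι) (ι × ι) ℂ) : Prop :=
  leg12 V * leg13 V * leg23 V = leg23 V * leg12 V

/-- `V` is a multiplicative unitary: a unitary satisfying the pentagon equation. -/
def IsMU (V : Matrix (ι × ι) (ι × ι) ℂ) : Prop :=
  V * V.conjTranspose = 1 ∧ V.conjTranspose * V = 1 ∧ Pentagon V

/-- `ξ` is a fixed vector for `V`. -/
def Fixed (V : Matrix (ι × ι) (ι × ι) ℂ) (ξ : EuclideanSpace ℂ ι) : Prop :=
  ∀ η, mact V (tens ξ η) = tens ξ η

/-- `ξ` is a cofixed vector for `V`. -/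
def Cofixed (V : Matrix (ι × ι) (ι × ι) ℂ) (ξ : EuclideanSpace ℂ ι) : Prop :=
  ∀ η, mact V (tens η ξ) = tens η ξ

/-- `V` has multiplicity 1, with fixed unit vector `e` and cofixed unit vector `eHat`. -/
def Mult1 (V : Matrix (ι × ι) (ι × ι) ℂ) (e eHat : EuclideanSpace ℂ ι) : Prop :=
  ‖e‖ = 1 ∧ ‖eHat‖ = 1 ∧ Fixed V e ∧ Cofixed V eHat ∧
    (∀ ξ, Fixed V ξ → ∃ c : ℂ, ξ = c • e) ∧
    (∀ ξ, Cofixed V ξ → ∃ c : ℂ, ξ = c • eHat)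

/-- A pre-subgroup of `V` (with fixed vector `e`): a unit vector `f` with
`⟨f,e⟩ > 0` and `V(f⊗f) = f⊗f`. -/
def IsPreSubgroup (V : Matrix (ι × ι) (ι × ι) ℂ) (e f : EuclideanSpace ℂ ι) : Prop :=
  ‖f‖ = 1 ∧ 0 < ⟪f, e⟫_ℂ ∧ mact V (tens f f) = tens f f

/-- The subspace `H^f = {η : V(f⊗η) = f⊗η}`. -/
def subUp (V : Matrix (ι × ι) (ι × ι) ℂ) (f : EuclideanSpace ℂ ι) :
    Submodule ℂ (EuclideanSpace ℂ ι) :=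
  LinearMap.ker ((mact V).comp (tensL f) - tensL f)

/-- The subspace `H_f = {η : V(η⊗f) = η⊗f}`. -/
def subDown (V : Matrix (ι × ι) (ι × ι) ℂ) (f : EuclideanSpace ℂ ι) :
    Submodule ℂ (EuclideanSpace ℂ ι) :=
  LinearMap.ker ((mact V).comp (tensR f) - tensR f)

/-- The slice `L(ω_{ξ,η}) = (ω_{ξ,η} ⊗ id)(V)`. -/
def Lslice (V : Matrix (ι × ι) (ι × ι) ℂ) (ξ η : EuclideanSpace ℂ ι) : Matrix ι ι ℂ :=
  fun a b => ∑ x, ∑ y, (starRingEnd ℂ) (ξ x) * η y * V (x, a) (y, b)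

/-- The slice `ρ(ω_{ξ,η}) = (id ⊗ ω_{ξ,η})(V)`. -/
def Rslice (V : Matrix (ι × ι) (ι × ι) ℂ) (ξ η : EuclideanSpace ℂ ι) : Matrix ι ι ℂ :=
  fun a b => ∑ x, ∑ y, (starRingEnd ℂ) (ξ x) * η y * V (a, x) (b, y)

/-- The slice `L(ω) = (ω ⊗ id)(V)` of a general linear functional `ω` on `L(H)`. -/
def LslF (V : Matrix (ι × ι) (ι × ι) ℂ) (ω : Matrix ι ι ℂ →ₗ[ℂ] ℂ) : Matrix ι ι ℂ :=
  fun a b => ω (fun x y => V (x, a) (y, b))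

/-- A state on `L(H)`: a unital positive linear functional. -/
def IsState (ω : Matrix ι ι ℂ →ₗ[ℂ] ℂ) : Prop :=
  ω 1 = 1 ∧ ∀ M : Matrix ι ι ℂ, M.PosSemidef → ∃ r : ℝ, 0 ≤ r ∧ ω M = r


end MU

/-!
Since `V₂₃` is unitary, the pentagon equation reads `V₁₂ V₂₃* = V₂₃* V₁₂ V₁₃`. Slice both sides
with `ω_{ξ,f} ⊗ id ⊗ ω_{η,g}`: the left side gives `L(ω_{ξ,f}) ρ(ω_{g,η})*`, and, because `V₁₃`
fixes every `f ⊗ ζ ⊗ g`, the right side gives `ρ(ω_{g,η})* L(ω_{ξ,f})`.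
-/

namespace MU

open Matrix

variable {ι : Type*}

lemma leg23_one [DecidableEq ι] : leg23 (1 : Matrix (ι × ι) (ι × ι) ℂ) = 1 := by
  ext ⟨p₁, p₂, p₃⟩ ⟨q₁, q₂, q₃⟩
  simp [leg23, one_apply, ite_and]

variable [Fintype ι]

lemma Rslice_conjTranspose (V : Matrix (ι × ι) (ι × ι) ℂ) (ξ η : EuclideanSpace ℂ ι) :
    Rslice Vᴴ η ξ = (Rslice V ξ η)ᴴ := by
  ext a b
  simp only [Rslice, conjTranspose_apply, star_sum, star_mul', starRingEnd_apply, star_star]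
  rw [Finset.sum_comm]
  exact Finset.sum_congr rfl fun _ _ => Finset.sum_congr rfl fun _ _ => by ring

variable [DecidableEq ι]

lemma leg23_mul (A B : Matrix (ι × ι) (ι × ι) ℂ) : leg23 (A * B) = leg23 A * leg23 B := by
  ext p q
  simp [leg23, mul_apply, Fintype.sum_prod_type]

lemma IsMU.leg12_mul_leg23_conjTranspose {V : Matrix (ι × ι) (ι × ι) ℂ} (hV : IsMU V) :
    leg12 V * leg23 Vᴴ = leg23 Vᴴ * leg12 V * leg13 V := by
  obtain ⟨hVVstar, hVstarV, hpent⟩ := hV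
  have h₁ : leg23 Vᴴ * leg23 V = 1 := by rw [← leg23_mul, hVstarV, leg23_one]
  have h₂ : leg23 V * leg23 Vᴴ = 1 := by rw [← leg23_mul, hVVstar, leg23_one]
  calc leg12 V * leg23 Vᴴ
      = leg23 Vᴴ * (leg23 V * leg12 V) * leg23 Vᴴ := by rw [← Matrix.mul_assoc, h₁, one_mul]
    _ = leg23 Vᴴ * (leg12 V * leg13 V * leg23 V) * leg23 Vᴴ := by rw [← hpent]
    _ = leg23 Vᴴ * leg12 V * leg13 V := by
        rw [Matrix.mul_assoc _ _ (leg23 Vᴴ), Matrix.mul_assoc _ (leg23 V), h₂, mul_one,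
          ← Matrix.mul_assoc]

def midVec (f : EuclideanSpace ℂ ι) (c : ι) (g : EuclideanSpace ℂ ι) : ι × ι × ι → ℂ :=
  fun p => f p.1 * (Pi.single c 1 : ι → ℂ) p.2.1 * g p.2.2

/-- The slice `(ω_{ξ,f} ⊗ id ⊗ ω_{η,g})(M)`, with entries `⟪ξ ⊗ e_a ⊗ η, M (f ⊗ e_c ⊗ g)⟫`. -/
def midSlice (M : Matrix (ι × ι × ι) (ι × ι × ι) ℂ) (ξ η f g : EuclideanSpace ℂ ι) :
    Matrix ι ι ℂ :=
  fun a c => star (midVec ξ a η) ⬝ᵥ (M *ᵥ midVec f c g)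

lemma midSlice_apply (M : Matrix (ι × ι × ι) (ι × ι × ι) ℂ) (ξ η f g : EuclideanSpace ℂ ι)
    (a c : ι) :
    midSlice M ξ η f g a c = ∑ x, ∑ u, ∑ y, ∑ w,
      starRingEnd ℂ (ξ x) * starRingEnd ℂ (η u) * (f y * g w) * M (x, a, u) (y, c, w) := by
  simp only [midSlice, dotProduct, Pi.star_apply, midVec, Pi.single_apply, mul_ite, ite_mul,
    mul_one, mul_zero, zero_mul, RCLike.star_def, apply_ite (starRingEnd ℂ), map_mul, map_zero,
    mulVec, Fintype.sum_prod_type, Finset.sum_ite_irrel, Finset.sum_const_zero,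
    Finset.sum_ite_eq', Finset.mem_univ, ↓reduceIte, Finset.mul_sum]
  refine Finset.sum_congr rfl fun _ _ => Finset.sum_congr rfl fun _ _ =>
    Finset.sum_congr rfl fun _ _ => Finset.sum_congr rfl fun _ _ => by ring

lemma midSlice_leg12_mul_leg23 (A B : Matrix (ι × ι) (ι × ι) ℂ) (ξ η f g : EuclideanSpace ℂ ι) :
    midSlice (leg12 A * leg23 B) ξ η f g = Lslice A ξ f * Rslice B η g := by
  ext a c
  simp only [midSlice_apply, mul_apply, leg12, leg23, Lslice, Rslice, Fintype.sum_prod_type,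
    mul_ite, ite_mul, mul_one, mul_zero, zero_mul, Prod.mk.eta, Finset.sum_ite_irrel,
    Finset.sum_ite_eq, Finset.sum_ite_eq', Finset.mem_univ, ↓reduceIte, Finset.sum_const_zero,
    Finset.mul_sum, Finset.sum_mul]
  simp only [← Fintype.sum_prod_type']
  refine Fintype.sum_equiv ⟨fun ⟨x, u, y, w, k⟩ => (k, u, w, x, y),
    fun ⟨k, u, w, x, y⟩ => (x, u, y, w, k), fun _ => rfl, fun _ => rfl⟩ _ _ ?_
  rintro ⟨x, u, y, w, k⟩
  dsimp only [Equiv.coe_fn_mk]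
  ring

lemma midSlice_leg23_mul_leg12 (A B : Matrix (ι × ι) (ι × ι) ℂ) (ξ η f g : EuclideanSpace ℂ ι) :
    midSlice (leg23 B * leg12 A) ξ η f g = Rslice B η g * Lslice A ξ f := by
  ext a c
  simp only [midSlice_apply, mul_apply, leg12, leg23, Lslice, Rslice, Fintype.sum_prod_type,
    mul_ite, ite_mul, mul_one, mul_zero, zero_mul, Prod.mk.eta, Finset.sum_ite_irrel,
    Finset.sum_ite_eq, Finset.sum_ite_eq', Finset.mem_univ, ↓reduceIte, Finset.sum_const_zero,
    Finset.mul_sum, Finset.sum_mul]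
  simp only [← Fintype.sum_prod_type']
  refine Fintype.sum_equiv ⟨fun ⟨x, u, y, w, k⟩ => (k, x, y, u, w),
    fun ⟨k, x, y, u, w⟩ => (x, u, y, w, k), fun _ => rfl, fun _ => rfl⟩ _ _ ?_
  rintro ⟨x, u, y, w, k⟩
  dsimp only [Equiv.coe_fn_mk]
  ring

lemma leg13_mulVec_midVec {V : Matrix (ι × ι) (ι × ι) ℂ} {f g : EuclideanSpace ℂ ι}
    (hfg : mact V (tens f g) = tens f g) (c : ι) :
    leg13 V *ᵥ midVec f c g = midVec f c g := by
  ext ⟨x, k, w⟩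
  have hxw := congrArg (fun v => v (x, w)) hfg
  simp only [mact, appM, tens, LinearMap.coe_mk, AddHom.coe_mk, Fintype.sum_prod_type] at hxw
  simp only [mulVec, dotProduct, leg13, midVec, Pi.single_apply, mul_ite, ite_mul, mul_one,
    mul_zero, zero_mul, Fintype.sum_prod_type, Finset.sum_ite_irrel, Finset.sum_const_zero,
    Finset.sum_ite_eq', Finset.mem_univ, ↓reduceIte]
  rw [hxw]

lemma midSlice_mul_leg13 {V : Matrix (ι × ι) (ι × ι) ℂ} {f g : EuclideanSpace ℂ ι}
    (hfg : mact V (tens f g) = tens f g) (M : Matrix (ι × ι × ι) (ι × ι × ι) ℂ)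
    (ξ η : EuclideanSpace ℂ ι) :
    midSlice (M * leg13 V) ξ η f g = midSlice M ξ η f g := by
  ext a c
  simp only [midSlice, ← mulVec_mulVec, leg13_mulVec_midVec hfg]

theorem Lslice_commutes_Rslice_star_general {ι : Type*} [Fintype ι] [DecidableEq ι]
    (V : Matrix (ι × ι) (ι × ι) ℂ) (hV : IsMU V)
    (f g : EuclideanSpace ℂ ι) (hfg : mact V (tens f g) = tens f g)
    (ξ η : EuclideanSpace ℂ ι) :
    Lslice V ξ f * (Rslice V g η).conjTranspose =
      (Rslice V g η).conjTranspose * Lslice V ξ f := by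
  rw [← Rslice_conjTranspose]
  calc Lslice V ξ f * Rslice Vᴴ η g
      = midSlice (leg23 Vᴴ * leg12 V * leg13 V) ξ η f g := by
        rw [← hV.leg12_mul_leg23_conjTranspose, midSlice_leg12_mul_leg23]
    _ = Rslice Vᴴ η g * Lslice V ξ f := by
        rw [midSlice_mul_leg13 hfg, midSlice_leg23_mul_leg12]

/-- if `V(f⊗g) = f⊗g` then `L(ω_ξf)` and `ρ(ω_gη)*` commute. -/
theorem Lslice_commutes_Rslice_star {ι : Type*} [Fintype ι] [DecidableEq ι] [Nonempty ι]
    (V : Matrix (ι × ι) (ι × ι) ℂ) (hV : IsMU V)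
    (f g : EuclideanSpace ℂ ι) (hfg : mact V (tens f g) = tens f g)
    (ξ η : EuclideanSpace ℂ ι) :
    Lslice V ξ f * (Rslice V g η).conjTranspose =
      (Rslice V g η).conjTranspose * Lslice V ξ f :=
  Lslice_commutes_Rslice_star_general V hV f g hfg ξ η

end MU
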